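/- arXiv:2504.20029 — 2 statements merged into one kernel-verified Lean document; each statement's English description precedes it below -/
import Mathlib

section
/- Let R be a ring in which 2 = 0, let e ∈ R be an idempotent, and let x ∈ R satisfy e·x + x·e = x. Then for every natural number m, (e + x)^(2^m) = e + Σ_{i=0}^{m} x^(2^i). -/
/-!
Put y = e + x. Idempotency and e·x + x·e = x give y² = y + x², and x² commutes with e, hence
with y. In characteristic 2 the map a ↦ a^(2^m) is additive on commuting pairs, so
y^(2^(m+1)) = (y + x²)^(2^m) = y^(2^m) + x^(2^(m+1)), which is the induction step.
-/

namespace Commute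

variable {R : Type*} [Semiring R]

theorem add_sq_of_two_eq_zero (h2 : (2 : R) = 0) {a b : R} (h : Commute a b) :
    (a + b) ^ 2 = a ^ 2 + b ^ 2 := by
  rw [h.add_sq, h2, zero_mul, zero_mul, add_zero]

theorem add_pow_two_pow_of_two_eq_zero (h2 : (2 : R) = 0) {a b : R} (h : Commute a b) (m : ℕ) :
    (a + b) ^ 2 ^ m = a ^ 2 ^ m + b ^ 2 ^ m := by
  induction m with
  | zero => simp
  | succ m ih =>
    rw [pow_succ, pow_mul, pow_mul, pow_mul, ih,
      (h.pow_pow _ _).add_sq_of_two_eq_zero h2]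

end Commute

section Ring

variable {R : Type*} [Ring R]

theorem commute_sq_of_mul_add_mul_eq_self {e x : R} (hx : e * x + x * e = x) :
    Commute e (x ^ 2) := by
  have hex : e * x = x - x * e := eq_sub_of_add_eq hx
  have hxe : x * e = x - e * x := eq_sub_of_add_eq' hx
  calc e * x ^ 2 = (x - x * e) * x := by rw [← hex, sq, mul_assoc]
    _ = x * (x - e * x) := by noncomm_ring
    _ = x ^ 2 * e := by rw [← hxe, sq, mul_assoc]

theorem add_sq_eq_self_add_sq {e x : R} (he : e * e = e) (hx : e * x + x * e = x) :
    (e + x) ^ 2 = (e + x) + x ^ 2 := by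
  calc (e + x) ^ 2 = e * e + (e * x + x * e) + x ^ 2 := by noncomm_ring
    _ = (e + x) + x ^ 2 := by rw [he, hx]

end Ring

theorem stmt_6 {R : Type*} [Ring R] (h2 : (2 : R) = 0)
    (e x : R) (he : e * e = e) (hx : e * x + x * e = x) (m : ℕ) :
    (e + x) ^ (2 ^ m) = e + ∑ i ∈ Finset.range (m + 1), x ^ (2 ^ i) := by
  have hcomm : Commute (e + x) (x ^ 2) :=
    (commute_sq_of_mul_add_mul_eq_self hx).add_left (Commute.self_pow x 2)
  induction m with
  | zero => simp
  | succ m ih =>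
    calc (e + x) ^ 2 ^ (m + 1) = ((e + x) + x ^ 2) ^ 2 ^ m := by
          rw [pow_succ', pow_mul, add_sq_eq_self_add_sq he hx]
      _ = (e + x) ^ 2 ^ m + x ^ 2 ^ (m + 1) := by
          rw [hcomm.add_pow_two_pow_of_two_eq_zero h2, ← pow_mul, ← pow_succ']
      _ = e + ∑ i ∈ Finset.range (m + 2), x ^ 2 ^ i := by
          rw [ih, Finset.sum_range_succ _ (m + 1), add_assoc]
end

section
/- Let R be a ring in which 2 = 0, let e ∈ R be an idempotent, and let x ∈ R satisfy e·x + x·e = x. If x·x is nilpotent, then there exists a natural number m such that (e + x)^(2^m) is an idempotent. -/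
/-!
Write `s = e + x` and `y = x²`. Idempotency of `e` and `ex + xe = x` give `s² = s + y`, and `y`
commutes with `e`, hence with `s`. In characteristic two, squaring is additive on commuting
elements, so repeated squaring yields `s^(2^(m+1)) = s^(2^m) + y^(2^m)`. Once `y^(2^m) = 0`,
the power `s^(2^m)` is idempotent.
-/

section TwoEqZero

variable {R : Type*} [Ring R]

theorem Commute.add_sq_of_two_eq_zero_s7 (h2 : (2 : R) = 0) {a b : R} (h : Commute a b) :
    (a + b) ^ 2 = a ^ 2 + b ^ 2 := by
  rw [h.add_sq, h2, zero_mul, zero_mul, add_zero]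

theorem pow_two_pow_succ_eq_add_of_mul_self_eq (h2 : (2 : R) = 0) {s y : R}
    (hs : s * s = s + y) (hsy : Commute s y) (m : ℕ) :
    s ^ 2 ^ (m + 1) = s ^ 2 ^ m + y ^ 2 ^ m := by
  induction m with
  | zero => simpa [sq] using hs
  | succ m ih =>
    calc s ^ 2 ^ (m + 1 + 1) = (s ^ 2 ^ (m + 1)) ^ 2 := by rw [pow_succ 2 (m + 1), pow_mul]
      _ = (s ^ 2 ^ m + y ^ 2 ^ m) ^ 2 := by rw [ih]
      _ = (s ^ 2 ^ m) ^ 2 + (y ^ 2 ^ m) ^ 2 := (hsy.pow_pow _ _).add_sq_of_two_eq_zero_s7 h2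
      _ = s ^ 2 ^ (m + 1) + y ^ 2 ^ (m + 1) := by rw [← pow_mul, ← pow_mul, ← pow_succ]

theorem exists_isIdempotentElem_pow_two_pow_of_mul_self_eq (h2 : (2 : R) = 0) {s y : R}
    (hs : s * s = s + y) (hsy : Commute s y) (hy : IsNilpotent y) :
    ∃ m : ℕ, IsIdempotentElem (s ^ 2 ^ m) := by
  obtain ⟨N, hN⟩ := hy
  obtain ⟨m, hm⟩ : ∃ m : ℕ, N ≤ 2 ^ m := ⟨N, Nat.lt_two_pow_self.le⟩
  refine ⟨m, ?_⟩
  have hstable : s ^ 2 ^ (m + 1) = s ^ 2 ^ m := by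
    rw [pow_two_pow_succ_eq_add_of_mul_self_eq h2 hs hsy, pow_eq_zero_of_le hm hN, add_zero]
  rwa [pow_succ, pow_mul, sq] at hstable

end TwoEqZero

theorem commute_mul_self_of_mul_add_mul_eq_self {R : Type*} [Ring R] {e x : R}
    (hx : e * x + x * e = x) : Commute e (x * x) := by
  have hex : e * x = x - x * e := eq_sub_of_add_eq hx
  have hxe : x * e = x - e * x := eq_sub_of_add_eq' hx
  calc e * (x * x) = x * x - x * e * x := by rw [← mul_assoc, hex, sub_mul]
    _ = x * (x - e * x) := by rw [mul_sub, mul_assoc]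
    _ = x * x * e := by rw [← hxe, mul_assoc]

theorem stmt_7 {R : Type*} [Ring R] (h2 : (2 : R) = 0)
    (e x : R) (he : e * e = e) (hx : e * x + x * e = x)
    (hnil : IsNilpotent (x * x)) :
    ∃ m : ℕ, IsIdempotentElem ((e + x) ^ (2 ^ m)) := by
  have hsq : (e + x) * (e + x) = (e + x) + x * x := by
    rw [add_mul, mul_add, mul_add, he, add_assoc, ← add_assoc (e * x), hx, ← add_assoc]
  have hcomm : Commute (e + x) (x * x) :=
    (commute_mul_self_of_mul_add_mul_eq_self hx).add_left ((Commute.refl x).mul_right (.refl x))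
  exact exists_isIdempotentElem_pow_two_pow_of_mul_self_eq h2 hsq hcomm hnil
end
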